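/- Let n ≥ 1 and let u₁,…,u_n, v₁,…,v_n, w₁,…,w_{n+1} : ℂⁿ → ℂ be differentiable functions of 𝐭 = (t₁,…,t_n). Write u_ξ(𝐭) = ξⁿ + ∑_{i=1}^{n} u_i(𝐭) ξ^{n−i}, v_ξ(𝐭) = ∑_{i=1}^{n} v_i(𝐭) ξ^{n−i}, w_ξ(𝐭) = ξ^{n+1} + ∑_{i=1}^{n+1} w_i(𝐭) ξ^{n+1−i}, and 𝒟_η = ∑_{i=1}^{n} η^{n−i} ∂/∂t_i. Suppose the Mumford system holds: for all 𝐭 ∈ ℂⁿ and all ξ, η ∈ ℂ, (ξ−η)·𝒟_η u_ξ = 2(v_ξ u_η − u_ξ v_η), (ξ−η)·(𝒟_η v_ξ − u_ξ u_η) = u_ξ w_η − w_ξ u_η, and (ξ−η)·(𝒟_η w_ξ + 2 v_ξ u_η) = 2(w_ξ v_η − v_ξ w_η). Then, with ∂ = ∂/∂t₁, the functions solve the Neumann–Moser system: for all 𝐭 and all ξ ∈ ℂ, ∂u_ξ = −2v_ξ, ∂v_ξ = −(ξ + w₁ − u₁)u_ξ + w_ξ, and ∂w_ξ = 2(ξ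 + w₁ − u₁)v_ξ. -/

import Mathlib

/-!
For fixed `t` and `ξ`, each Mumford equation is an identity between polynomials in `η` whose left
side is `(ξ - η) * P(η)`, where `𝒟_η f = ∑ⱼ η^(n-1-j) ∂ⱼ f` has degree `< n` in `η` with leading
coefficient `∂₁ f`. The `η^n`-coefficient of `(ξ - η) * P` is `ξ [η^n] P - [η^(n-1)] P`, so comparing
`η^n`-coefficients yields the Neumann–Moser equations; on the right only the two top coefficients
of `u_η`, `v_η`, `w_η` enter, which is where `u₁` and `w₁` come from.
-/

open Finset Polynomial

namespace Polynomial

variable {R : Type*} [CommRing R]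

/-- `c₀ X^(n-1) + c₁ X^(n-2) + ⋯ + c_(n-1)`: the coefficients are listed by descending degree,
as in the generating polynomials of the Mumford system. -/
noncomputable def descPoly {n : ℕ} (c : Fin n → R) : R[X] :=
  ∑ i, C (c i) * X ^ (n - 1 - (i : ℕ))

theorem eval_descPoly {n : ℕ} (c : Fin n → R) (x : R) :
    (descPoly c).eval x = ∑ i : Fin n, x ^ (n - 1 - (i : ℕ)) * c i := by
  rw [descPoly, eval_finsetSum]
  exact sum_congr rfl fun i _ => by rw [eval_C_mul, eval_X_pow, mul_comm]

theorem coeff_descPoly_of_le {n k : ℕ} (c : Fin n → R) (hk : n ≤ k) :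
    (descPoly c).coeff k = 0 := by
  refine (finsetSum_coeff _ _ _).trans (sum_eq_zero fun i _ => ?_)
  rw [coeff_C_mul, coeff_X_pow, if_neg (by omega), mul_zero]

theorem coeff_descPoly_last {m : ℕ} (c : Fin (m + 1) → R) : (descPoly c).coeff m = c 0 := by
  rw [descPoly, finsetSum_coeff, sum_eq_single 0]
  · simp
  · intro i _ hi
    have : (i : ℕ) ≠ 0 := fun h => hi (Fin.ext h)
    rw [coeff_C_mul, coeff_X_pow, if_neg (by omega), mul_zero]
  · simp

theorem coeff_succ_of_forall_sub_mul_eval [IsDomain R] [Infinite R] {ξ : R} {P Q : R[X]}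
    (h : ∀ η, (ξ - η) * P.eval η = Q.eval η) (k : ℕ) :
    ξ * P.coeff (k + 1) - P.coeff k = Q.coeff (k + 1) := by
  have hPQ : (C ξ - X) * P = Q := Polynomial.funext fun η => by simpa using h η
  simpa [sub_mul, coeff_X_mul] using congrArg (coeff · (k + 1)) hPQ

end Polynomial

theorem mumford_solves_neumann_moser_general (n : ℕ) (hn : 1 ≤ n)
    (u v : Fin n → (Fin n → ℂ) → ℂ) (w : Fin (n + 1) → (Fin n → ℂ) → ℂ)
    (Uf Vf Wf : (Fin n → ℂ) → ℂ → ℂ)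
    (hUf : ∀ t ξ, Uf t ξ = ξ ^ n + ∑ i : Fin n, u i t * ξ ^ (n - 1 - (i : ℕ)))
    (hVf : ∀ t ξ, Vf t ξ = ∑ i : Fin n, v i t * ξ ^ (n - 1 - (i : ℕ)))
    (hWf : ∀ t ξ, Wf t ξ = ξ ^ (n + 1) + ∑ i : Fin (n + 1), w i t * ξ ^ (n - (i : ℕ)))
    (hM1 : ∀ (t : Fin n → ℂ) (ξ η : ℂ),
      (ξ - η) * (∑ j : Fin n, η ^ (n - 1 - (j : ℕ))
          * fderiv ℂ (fun s => Uf s ξ) t (Pi.single j 1))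
        = 2 * (Vf t ξ * Uf t η - Uf t ξ * Vf t η))
    (hM2 : ∀ (t : Fin n → ℂ) (ξ η : ℂ),
      (ξ - η) * ((∑ j : Fin n, η ^ (n - 1 - (j : ℕ))
          * fderiv ℂ (fun s => Vf s ξ) t (Pi.single j 1)) - Uf t ξ * Uf t η)
        = Uf t ξ * Wf t η - Wf t ξ * Uf t η)
    (hM3 : ∀ (t : Fin n → ℂ) (ξ η : ℂ),
      (ξ - η) * ((∑ j : Fin n, η ^ (n - 1 - (j : ℕ))
          * fderiv ℂ (fun s => Wf s ξ) t (Pi.single j 1)) + 2 * Vf t ξ * Uf t η)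
        = 2 * (Wf t ξ * Vf t η - Vf t ξ * Wf t η)) :
    ∀ (t : Fin n → ℂ) (ξ : ℂ),
      fderiv ℂ (fun s => Uf s ξ) t (Pi.single (⟨0, hn⟩ : Fin n) 1) = -2 * Vf t ξ
      ∧ fderiv ℂ (fun s => Vf s ξ) t (Pi.single (⟨0, hn⟩ : Fin n) 1)
          = -(ξ + w 0 t - u (⟨0, hn⟩ : Fin n) t) * Uf t ξ + Wf t ξ
      ∧ fderiv ℂ (fun s => Wf s ξ) t (Pi.single (⟨0, hn⟩ : Fin n) 1)
          = 2 * (ξ + w 0 t - u (⟨0, hn⟩ : Fin n) t) * Vf t ξ := by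
  obtain ⟨m, rfl⟩ : ∃ m, n = m + 1 := ⟨n - 1, by omega⟩
  intro t ξ
  set U : ℂ[X] := X ^ (m + 1) + descPoly fun i => u i t
  set V : ℂ[X] := descPoly fun i => v i t
  set W : ℂ[X] := X ^ (m + 1 + 1) + descPoly fun i => w i t
  have hU : ∀ η, Uf t η = U.eval η := by simp [U, hUf, eval_descPoly, mul_comm]
  have hV : ∀ η, Vf t η = V.eval η := by simp [V, hVf, eval_descPoly, mul_comm]
  have hW : ∀ η, Wf t η = W.eval η := by simp [W, hWf, eval_descPoly, mul_comm]
  set A := descPoly fun j => fderiv ℂ (fun s => Uf s ξ) t (Pi.single j 1)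
  set B := descPoly fun j => fderiv ℂ (fun s => Vf s ξ) t (Pi.single j 1)
  set D := descPoly fun j => fderiv ℂ (fun s => Wf s ξ) t (Pi.single j 1)
  have hu₀ := coeff_succ_of_forall_sub_mul_eval
    (P := A) (Q := C 2 * (C (Vf t ξ) * U - C (Uf t ξ) * V)) (fun η => by
      have := hM1 t ξ η
      simp only [← eval_descPoly] at this
      simpa [← hU, ← hV] using this) m
  have hv₀ := coeff_succ_of_forall_sub_mul_eval
    (P := B - C (Uf t ξ) * U) (Q := C (Uf t ξ) * W - C (Wf t ξ) * U) (fun η => by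
      have := hM2 t ξ η
      simp only [← eval_descPoly] at this
      simpa [← hU, ← hW] using this) m
  have hw₀ := coeff_succ_of_forall_sub_mul_eval
    (P := D + C (2 * Vf t ξ) * U) (Q := C 2 * (C (Wf t ξ) * V - C (Vf t ξ) * W)) (fun η => by
      have := hM3 t ξ η
      simp only [← eval_descPoly] at this
      simpa [← hU, ← hV, ← hW, mul_assoc] using this) m
  simp only [A, B, D, U, V, W, coeff_add, coeff_sub, coeff_C_mul, coeff_X_pow, Nat.ne_add_one,
    if_pos, if_false, coeff_descPoly_of_le _ le_rfl, coeff_descPoly_last] at hu₀ hv₀ hw₀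
  rw [show (⟨0, hn⟩ : Fin (m + 1)) = 0 from rfl]
  exact ⟨by linear_combination -hu₀, by linear_combination -hv₀, by linear_combination -hw₀⟩

/-- Every solution of the Mumford dynamical system solves the Neumann–Moser system in the
first time variable `t₁` (i.e. with `∂ = ∂/∂t₁`). -/
theorem mumford_solves_neumann_moser (n : ℕ) (hn : 1 ≤ n)
    (u v : Fin n → (Fin n → ℂ) → ℂ) (w : Fin (n + 1) → (Fin n → ℂ) → ℂ)
    (hu : ∀ i, Differentiable ℂ (u i)) (hv : ∀ i, Differentiable ℂ (v i))
    (hw : ∀ i, Differentiable ℂ (w i))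
    (Uf Vf Wf : (Fin n → ℂ) → ℂ → ℂ)
    (hUf : ∀ t ξ, Uf t ξ = ξ ^ n + ∑ i : Fin n, u i t * ξ ^ (n - 1 - (i : ℕ)))
    (hVf : ∀ t ξ, Vf t ξ = ∑ i : Fin n, v i t * ξ ^ (n - 1 - (i : ℕ)))
    (hWf : ∀ t ξ, Wf t ξ = ξ ^ (n + 1) + ∑ i : Fin (n + 1), w i t * ξ ^ (n - (i : ℕ)))
    (hM1 : ∀ (t : Fin n → ℂ) (ξ η : ℂ),
      (ξ - η) * (∑ j : Fin n, η ^ (n - 1 - (j : ℕ))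
          * fderiv ℂ (fun s => Uf s ξ) t (Pi.single j 1))
        = 2 * (Vf t ξ * Uf t η - Uf t ξ * Vf t η))
    (hM2 : ∀ (t : Fin n → ℂ) (ξ η : ℂ),
      (ξ - η) * ((∑ j : Fin n, η ^ (n - 1 - (j : ℕ))
          * fderiv ℂ (fun s => Vf s ξ) t (Pi.single j 1)) - Uf t ξ * Uf t η)
        = Uf t ξ * Wf t η - Wf t ξ * Uf t η)
    (hM3 : ∀ (t : Fin n → ℂ) (ξ η : ℂ),
      (ξ - η) * ((∑ j : Fin n, η ^ (n - 1 - (j : ℕ))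
          * fderiv ℂ (fun s => Wf s ξ) t (Pi.single j 1)) + 2 * Vf t ξ * Uf t η)
        = 2 * (Wf t ξ * Vf t η - Vf t ξ * Wf t η)) :
    ∀ (t : Fin n → ℂ) (ξ : ℂ),
      fderiv ℂ (fun s => Uf s ξ) t (Pi.single (⟨0, hn⟩ : Fin n) 1) = -2 * Vf t ξ
      ∧ fderiv ℂ (fun s => Vf s ξ) t (Pi.single (⟨0, hn⟩ : Fin n) 1)
          = -(ξ + w 0 t - u (⟨0, hn⟩ : Fin n) t) * Uf t ξ + Wf t ξ
      ∧ fderiv ℂ (fun s => Wf s ξ) t (Pi.single (⟨0, hn⟩ : Fin n) 1)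
          = 2 * (ξ + w 0 t - u (⟨0, hn⟩ : Fin n) t) * Vf t ξ :=
  mumford_solves_neumann_moser_general n hn u v w Uf Vf Wf hUf hVf hWf hM1 hM2 hM3
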